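/- Let A be a commutative ring, n ≥ 1, and λ_{i,j} ∈ A for 1 ≤ i,j ≤ n−1 with i+j ≤ n, satisfying λ_{i,j} = λ_{j,i} and the associativity condition λ_{i,j} λ_{i+j,k} = λ_{j,k} λ_{i,j+k} whenever all indices involved are in range. Let Jₙ ⊂ A[t₁,…,tₙ] be the ideal generated by {t_i t_j − λ_{i,j} t_{i+j} : 1 ≤ i,j ≤ n−1, i+j ≤ n} and {t_i t_j : 1 ≤ i,j ≤ n, i+j > n}. Let A ⋉ₙ A be the n-trivial extension of A by n copies of A with products φ_{i,j}(a,a′) = λ_{i,j} a a′. Then the map (a₀, a₁, …, aₙ) ↦ a₀ + a₁ t₁ + ⋯ + aₙ tₙ (mod Jₙ) is an isomorphism of A-algebras A ⋉ₙ A ≅ A[t₁,…,tₙ]/Jₙ. -/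

import Mathlib

open MvPolynomial

/-- The ideal `Jₙ ⊂ A[t₁,…,tₙ]` generated by
`{t_i t_j − λ_{i,j} t_{i+j} : 1 ≤ i,j ≤ n−1, i+j ≤ n}` and
`{t_i t_j : 1 ≤ i,j ≤ n, i+j > n}`; the variable of index `i : Fin n` is `t_{i+1}`. -/
noncomputable def Jideal {A : Type*} [CommRing A] (n : ℕ) (lam : ℕ → ℕ → A) :
    Ideal (MvPolynomial (Fin n) A) :=
  Ideal.span
    ({p | ∃ (i j : Fin n) (h : i.1 + j.1 + 2 ≤ n),
        p = X i * X j -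
          C (lam (i.1 + 1) (j.1 + 1)) * X (⟨i.1 + j.1 + 1, by omega⟩ : Fin n)} ∪
      {p | ∃ i j : Fin n, n < i.1 + j.1 + 2 ∧ p = X i * X j})

/-- The multiplication of the `n`-trivial extension `A ⋉ₙ A` of `A` by `n` copies of `A`
with products `φ_{i,j}(a,a′) = λ_{i,j} a a′` (encoded on `A × (Fin n → A)`, the component
of index `i : Fin n` being the one of degree `i+1`). -/
def lamMul {A : Type*} [CommRing A] (n : ℕ) (lam : ℕ → ℕ → A)
    (x y : A × (Fin n → A)) : A × (Fin n → A) :=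
  ⟨x.1 * y.1, fun l =>
    x.1 * y.2 l + y.1 * x.2 l +
      ∑ j : Fin l.1,
        lam (j.1 + 1) (l.1 - j.1) *
          x.2 ⟨j.1, by have := j.2; have := l.2; omega⟩ *
          y.2 ⟨l.1 - j.1 - 1, by have := j.2; have := l.2; omega⟩⟩

section TrivExtAux

variable {A : Type*} [CommRing A]

/-- auxiliary: `lam'` extends `lam` by `1` when either index is `0`. -/
def lamExt (lam : ℕ → ℕ → A) (i j : ℕ) : A := if i = 0 ∨ j = 0 then 1 else lam i j

@[simp] lemma lamExt_zero_left (lam : ℕ → ℕ → A) (j : ℕ) : lamExt lam 0 j = 1 := by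
  simp [lamExt]

@[simp] lemma lamExt_zero_right (lam : ℕ → ℕ → A) (i : ℕ) : lamExt lam i 0 = 1 := by
  simp [lamExt]

lemma lamExt_pos (lam : ℕ → ℕ → A) {i j : ℕ} (hi : i ≠ 0) (hj : j ≠ 0) :
    lamExt lam i j = lam i j := by simp [lamExt, hi, hj]

/-- carrier of the model ring -/
@[ext] structure TE (A : Type*) [CommRing A] (n : ℕ) (lam : ℕ → ℕ → A)
    (hsym : ∀ i j, 1 ≤ i → 1 ≤ j → i + j ≤ n → lam i j = lam j i)
    (hassoc : ∀ i j l, 1 ≤ i → 1 ≤ j → 1 ≤ l → i + j + l ≤ n →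
      lam i j * lam (i + j) l = lam j l * lam i (j + l)) where
  f : ℕ → A
  supp : ∀ k, n < k → f k = 0

namespace TE

variable {n : ℕ} {lam : ℕ → ℕ → A}
  {hsym : ∀ i j, 1 ≤ i → 1 ≤ j → i + j ≤ n → lam i j = lam j i}
  {hassoc : ∀ i j l, 1 ≤ i → 1 ≤ j → 1 ≤ l → i + j + l ≤ n →
      lam i j * lam (i + j) l = lam j l * lam i (j + l)}

instance : Add (TE A n lam hsym hassoc) :=
  ⟨fun x y => ⟨fun k => x.f k + y.f k, fun k hk => by rw [x.supp k hk, y.supp k hk, add_zero]⟩⟩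

instance : Neg (TE A n lam hsym hassoc) :=
  ⟨fun x => ⟨fun k => -x.f k, fun k hk => by rw [x.supp k hk, neg_zero]⟩⟩

instance : Zero (TE A n lam hsym hassoc) := ⟨⟨fun _ => 0, fun _ _ => rfl⟩⟩

instance : One (TE A n lam hsym hassoc) :=
  ⟨⟨fun k => if k = 0 then 1 else 0, fun k hk => by simp; omega⟩⟩

instance : Mul (TE A n lam hsym hassoc) :=
  ⟨fun x y => ⟨fun k => if k ≤ n then
      ∑ i ∈ Finset.range (k + 1), lamExt lam i (k - i) * x.f i * y.f (k - i) else 0,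
    fun k hk => by simp [Nat.not_le.mpr hk]⟩⟩

@[simp] lemma add_f (x y : TE A n lam hsym hassoc) (k : ℕ) : (x + y).f k = x.f k + y.f k := rfl
@[simp] lemma neg_f (x : TE A n lam hsym hassoc) (k : ℕ) : (-x).f k = -x.f k := rfl
@[simp] lemma zero_f (k : ℕ) : (0 : TE A n lam hsym hassoc).f k = 0 := rfl
@[simp] lemma one_f (k : ℕ) : (1 : TE A n lam hsym hassoc).f k = if k = 0 then 1 else 0 := rfl

lemma mul_f (x y : TE A n lam hsym hassoc) (k : ℕ) :
    (x * y).f k = if k ≤ n then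
      ∑ i ∈ Finset.range (k + 1), lamExt lam i (k - i) * x.f i * y.f (k - i) else 0 := rfl

lemma mul_f_of_le (x y : TE A n lam hsym hassoc) {k : ℕ} (hk : k ≤ n) :
    (x * y).f k = ∑ i ∈ Finset.range (k + 1), lamExt lam i (k - i) * x.f i * y.f (k - i) := by
  rw [mul_f, if_pos hk]


lemma sum_conv {M : Type*} [AddCommMonoid M] (k : ℕ) (F : ℕ → ℕ → ℕ → M) :
    ∑ m ∈ Finset.range (k + 1), ∑ i ∈ Finset.range (m + 1), F i (m - i) (k - m)
      = ∑ i ∈ Finset.range (k + 1), ∑ j ∈ Finset.range (k - i + 1), F i j (k - i - j) := by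
  have step1 : ∀ m ∈ Finset.range (k + 1),
      ∑ i ∈ Finset.range (m + 1), F i (m - i) (k - m)
        = ∑ i ∈ Finset.range (k + 1), (if i ≤ m then F i (m - i) (k - m) else 0) := by
    intro m hm
    simp only [Finset.mem_range] at hm
    have h1 : ∑ i ∈ Finset.range (m + 1), F i (m - i) (k - m)
        = ∑ i ∈ Finset.range (m + 1), (if i ≤ m then F i (m - i) (k - m) else 0) :=
      Finset.sum_congr rfl fun i hi => by
        simp only [Finset.mem_range] at hi
        rw [if_pos (by omega)]
    rw [h1]
    refine Finset.sum_subset (Finset.range_subset_range.mpr (by omega)) fun i _ hi => ?_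
    simp only [Finset.mem_range] at hi
    rw [if_neg (by omega)]
  rw [Finset.sum_congr rfl step1, Finset.sum_comm]
  refine Finset.sum_congr rfl fun i hi => ?_
  simp only [Finset.mem_range] at hi
  have sub : Finset.Ico i (k + 1) ⊆ Finset.range (k + 1) := by
    intro m hm
    simp only [Finset.mem_Ico] at hm
    simp only [Finset.mem_range]
    omega
  have h2 : ∑ m ∈ Finset.Ico i (k + 1), (if i ≤ m then F i (m - i) (k - m) else 0)
      = ∑ m ∈ Finset.range (k + 1), (if i ≤ m then F i (m - i) (k - m) else 0) := by
    refine Finset.sum_subset sub fun m hmem hm => ?_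
    simp only [Finset.mem_range] at hmem
    simp only [Finset.mem_Ico] at hm
    rw [if_neg (by omega)]
  rw [← h2, Finset.sum_Ico_eq_sum_range]
  have hki : k + 1 - i = k - i + 1 := by omega
  rw [hki]
  refine Finset.sum_congr rfl fun j hj => ?_
  simp only [Finset.mem_range] at hj
  rw [if_pos (by omega)]
  have e1 : i + j - i = j := by omega
  have e2 : k - (i + j) = k - i - j := by omega
  rw [e1, e2]

lemma mul_comm' (x y : TE A n lam hsym hassoc) : x * y = y * x := by
  ext k
  rw [mul_f, mul_f]
  by_cases hk : k ≤ n
  · rw [if_pos hk, if_pos hk, ← Finset.sum_range_reflect]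
    refine Finset.sum_congr rfl fun i hi => ?_
    simp only [Finset.mem_range] at hi
    have h1 : k + 1 - 1 - i = k - i := by omega
    have h2 : k - (k - i) = i := by omega
    rw [h1, h2]
    have h3 : lamExt lam (k - i) i = lamExt lam i (k - i) := by
      rcases Nat.eq_zero_or_pos i with h | h
      · subst h; simp
      rcases Nat.eq_zero_or_pos (k - i) with h' | h'
      · rw [h']; simp
      rw [lamExt_pos lam (by omega) (by omega), lamExt_pos lam (by omega) (by omega)]
      exact (hsym _ _ h h' (by omega)).symm
    rw [h3]; ring
  · rw [if_neg hk, if_neg hk]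

lemma one_mul' (x : TE A n lam hsym hassoc) : 1 * x = x := by
  ext k
  rw [mul_f]
  by_cases hk : k ≤ n
  · rw [if_pos hk]
    rw [Finset.sum_eq_single 0]
    · simp
    · intro i _ hi; simp [one_f, hi]
    · intro h; simp at h
  · rw [if_neg hk, (x.supp k (by omega))]

lemma mul_assoc' (x y z : TE A n lam hsym hassoc) : x * y * z = x * (y * z) := by
  ext k
  by_cases hk : k ≤ n
  · rw [mul_f_of_le _ _ hk, mul_f_of_le _ _ hk]
    have L : ∀ m ∈ Finset.range (k + 1),
        lamExt lam m (k - m) * (x * y).f m * z.f (k - m)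
          = ∑ i ∈ Finset.range (m + 1),
              (lamExt lam i (m - i) * lamExt lam (i + (m - i)) (k - m)) *
                (x.f i * (y.f (m - i) * z.f (k - m))) := by
      intro m hm
      simp only [Finset.mem_range] at hm
      rw [mul_f_of_le _ _ (by omega), Finset.mul_sum, Finset.sum_mul]
      refine Finset.sum_congr rfl fun i hi => ?_
      simp only [Finset.mem_range] at hi
      have : i + (m - i) = m := by omega
      rw [this]; ring
    have R : ∀ i ∈ Finset.range (k + 1),
        lamExt lam i (k - i) * x.f i * (y * z).f (k - i)
          = ∑ j ∈ Finset.range (k - i + 1),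
              (lamExt lam j (k - i - j) * lamExt lam i (j + (k - i - j))) *
                (x.f i * (y.f j * z.f (k - i - j))) := by
      intro i hi
      simp only [Finset.mem_range] at hi
      rw [mul_f_of_le _ _ (by omega), Finset.mul_sum]
      refine Finset.sum_congr rfl fun j hj => ?_
      simp only [Finset.mem_range] at hj
      have : j + (k - i - j) = k - i := by omega
      rw [this]; ring
    rw [Finset.sum_congr rfl L, Finset.sum_congr rfl R,
      sum_conv k (fun i j l => (lamExt lam i j * lamExt lam (i + j) l) * (x.f i * (y.f j * z.f l)))]
    refine Finset.sum_congr rfl fun i hi => Finset.sum_congr rfl fun j hj => ?_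
    simp only [Finset.mem_range] at hi hj
    have key : lamExt lam i j * lamExt lam (i + j) (k - i - j)
        = lamExt lam j (k - i - j) * lamExt lam i (j + (k - i - j)) := by
      set l := k - i - j with hl
      rcases Nat.eq_zero_or_pos i with h1 | h1
      · subst h1; simp
      rcases Nat.eq_zero_or_pos j with h2 | h2
      · subst h2; simp
      rcases Nat.eq_zero_or_pos l with h3 | h3
      · rw [h3]; simp
      rw [lamExt_pos lam (by omega) (by omega), lamExt_pos lam (by omega) (by omega),
        lamExt_pos lam (by omega) (by omega), lamExt_pos lam (by omega) (by omega)]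
      exact hassoc i j l h1 h2 h3 (by omega)
    rw [key]
  · rw [mul_f, mul_f, if_neg hk, if_neg hk]

instance : CommRing (TE A n lam hsym hassoc) where
  add := (· + ·)
  add_assoc x y z := by ext k; simp [add_assoc]
  zero := 0
  zero_add x := by ext k; simp
  add_zero x := by ext k; simp
  add_comm x y := by ext k; simp [add_comm]
  neg := Neg.neg
  neg_add_cancel x := by ext k; simp
  mul := (· * ·)
  mul_assoc := mul_assoc'
  one := 1
  one_mul := one_mul'
  mul_one x := by rw [mul_comm']; exact one_mul' x
  left_distrib x y z := by
    ext k; rw [mul_f, add_f, mul_f, mul_f]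
    by_cases hk : k ≤ n
    · simp only [if_pos hk, add_f, ← Finset.sum_add_distrib]
      exact Finset.sum_congr rfl fun i _ => by ring
    · simp [if_neg hk]
  right_distrib x y z := by
    ext k; rw [mul_f, add_f, mul_f, mul_f]
    by_cases hk : k ≤ n
    · simp only [if_pos hk, add_f, ← Finset.sum_add_distrib]
      exact Finset.sum_congr rfl fun i _ => by ring
    · simp [if_neg hk]
  mul_comm := mul_comm'
  zero_mul x := by
    ext k; rw [mul_f]
    by_cases hk : k ≤ n <;> simp [hk]
  mul_zero x := by
    ext k; rw [mul_f]
    by_cases hk : k ≤ n <;> simp [hk]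
  nsmul := nsmulRec
  zsmul := zsmulRec


lemma sub_f (x y : TE A n lam hsym hassoc) (k : ℕ) : (x - y).f k = x.f k - y.f k := by
  rw [sub_eq_add_neg, add_f, neg_f, sub_eq_add_neg]

/-- the structural map `A → TE`. -/
def Cte (a : A) : TE A n lam hsym hassoc :=
  ⟨fun k => if k = 0 then a else 0, fun k hk => by rw [if_neg (by omega)]⟩

@[simp] lemma Cte_f (a : A) (k : ℕ) :
    (Cte a : TE A n lam hsym hassoc).f k = if k = 0 then a else 0 := rfl

lemma Cte_mul_f (a : A) (x : TE A n lam hsym hassoc) (k : ℕ) :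
    ((Cte a : TE A n lam hsym hassoc) * x).f k = a * x.f k := by
  by_cases hk : k ≤ n
  · rw [mul_f_of_le _ _ hk, Finset.sum_eq_single 0]
    · simp
    · intro i _ hi
      simp [Cte_f, hi]
    · intro h
      simp at h
  · rw [mul_f, if_neg hk, x.supp k (by omega), mul_zero]

/-- `Cte` as a ring hom. -/
def CteHom : A →+* TE A n lam hsym hassoc where
  toFun := Cte
  map_one' := by ext k; rfl
  map_mul' a b := by
    ext k
    rw [Cte_mul_f, Cte_f, Cte_f]
    by_cases h : k = 0 <;> simp [h]
  map_zero' := by ext k; simp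
  map_add' a b := by
    ext k
    simp only [Cte_f, add_f]
    by_cases h : k = 0 <;> simp [h]

noncomputable instance : Algebra A (TE A n lam hsym hassoc) := (CteHom).toAlgebra

lemma algebraMap_eq :
    (algebraMap A (TE A n lam hsym hassoc) : A →+* TE A n lam hsym hassoc) = CteHom := rfl

/-- basis elements `δ_m`. -/
def delta (m : ℕ) (hm : m ≤ n) : TE A n lam hsym hassoc :=
  ⟨fun k => if k = m then 1 else 0, fun k hk => by rw [if_neg (by omega)]⟩

@[simp] lemma delta_f (m : ℕ) (hm : m ≤ n) (k : ℕ) :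
    (delta m hm : TE A n lam hsym hassoc).f k = if k = m then 1 else 0 := rfl

lemma delta_mul_delta_f (a b : ℕ) (ha : 1 ≤ a) (ha' : a ≤ n) (hb : 1 ≤ b) (hb' : b ≤ n)
    (k : ℕ) :
    ((delta a ha' * delta b hb' : TE A n lam hsym hassoc)).f k
      = if k = a + b ∧ k ≤ n then lamExt lam a b else 0 := by
  by_cases hk : k ≤ n
  · rw [mul_f_of_le _ _ hk]
    by_cases hak : a ≤ k
    · rw [Finset.sum_eq_single a]
      · rw [delta_f, delta_f, if_pos rfl, mul_one]
        by_cases hb2 : k - a = b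
        · rw [if_pos hb2, mul_one, if_pos (show k = a + b ∧ k ≤ n by omega), hb2]
        · rw [if_neg hb2, mul_zero, if_neg (by omega)]
      · intro i _ hi
        simp [delta_f, hi]
      · intro h
        simp only [Finset.mem_range] at h
        omega
    · rw [Finset.sum_eq_zero, if_neg (by omega)]
      intro i hi
      simp only [Finset.mem_range] at hi
      simp [delta_f, show i ≠ a by omega]
  · rw [mul_f, if_neg hk, if_neg (by omega)]

lemma Cte_mul_delta_f (c : A) (m : ℕ) (hm : m ≤ n) (k : ℕ) :
    ((Cte c * delta m hm : TE A n lam hsym hassoc)).f k = if k = m then c else 0 := by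
  rw [Cte_mul_f, delta_f]
  by_cases h : k = m <;> simp [h]

/-- evaluation at `k` as an additive hom. -/
def evalHom (k : ℕ) : TE A n lam hsym hassoc →+ A where
  toFun t := t.f k
  map_zero' := rfl
  map_add' _ _ := rfl


lemma sum_f {ι : Type*} (s : Finset ι) (g : ι → TE A n lam hsym hassoc) (k : ℕ) :
    (∑ i ∈ s, g i).f k = ∑ i ∈ s, (g i).f k :=
  map_sum (evalHom k) g s

/-- the evaluation algebra hom sending `X i` to `δ_{i+1}`. -/
noncomputable def psi : MvPolynomial (Fin n) A →ₐ[A] TE A n lam hsym hassoc :=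
  aeval fun i : Fin n => delta (i.1 + 1) i.2

lemma psi_X (i : Fin n) :
    (psi (hsym := hsym) (hassoc := hassoc)) (X i) = delta (i.1 + 1) i.2 :=
  aeval_X _ _

lemma psi_C (a : A) : (psi (hsym := hsym) (hassoc := hassoc)) (C a) = Cte a := by
  rw [psi, aeval_C]; rfl

lemma Jideal_le_ker :
    Jideal n lam ≤ RingHom.ker (psi (hsym := hsym) (hassoc := hassoc)).toRingHom := by
  rw [Jideal, Ideal.span_le]
  rintro p (⟨i, j, h, rfl⟩ | ⟨i, j, h, rfl⟩) <;>
    simp only [SetLike.mem_coe, RingHom.mem_ker, AlgHom.toRingHom_eq_coe, RingHom.coe_coe,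
      map_sub, map_mul, psi_X, psi_C]
  · ext k
    rw [sub_f, delta_mul_delta_f _ _ (by omega) _ (by omega) _ k,
      Cte_mul_delta_f, zero_f]
    by_cases hk : k = i.1 + 1 + (j.1 + 1)
    · rw [if_pos ⟨hk, by omega⟩, if_pos (by omega),
        lamExt_pos lam (by omega) (by omega)]
      ring
    · rw [if_neg (by omega), if_neg (by omega), sub_zero]
  · ext k
    rw [delta_mul_delta_f _ _ (by omega) _ (by omega) _ k, if_neg (by omega), zero_f]

/-- the induced map on the quotient. -/
noncomputable def psiQ :
    (MvPolynomial (Fin n) A ⧸ Jideal n lam) →+* TE A n lam hsym hassoc :=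
  Ideal.Quotient.lift (Jideal n lam) (psi (hsym := hsym) (hassoc := hassoc)).toRingHom
    fun _ ha => Jideal_le_ker ha

@[simp] lemma psiQ_mk (p : MvPolynomial (Fin n) A) :
    (psiQ (hsym := hsym) (hassoc := hassoc)) (Ideal.Quotient.mk (Jideal n lam) p) = psi p :=
  Ideal.Quotient.lift_mk _ _ _

lemma psi_poly_f_zero (x : A × (Fin n → A)) :
    ((psi (hsym := hsym) (hassoc := hassoc))
        (C x.1 + ∑ i : Fin n, C (x.2 i) * X i)).f 0 = x.1 := by
  rw [map_add, map_sum, add_f, sum_f]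
  simp only [map_mul, psi_X, psi_C]
  rw [Cte_f, if_pos rfl, Finset.sum_eq_zero, add_zero]
  intro i _
  show (Cte (x.2 i) * delta (i.1 + 1) i.2 : TE A n lam hsym hassoc).f 0 = 0
  rw [Cte_mul_delta_f, if_neg (by omega)]

lemma psi_poly_f (x : A × (Fin n → A)) (k : ℕ) (h1 : 1 ≤ k) (h2 : k ≤ n) :
    ((psi (hsym := hsym) (hassoc := hassoc))
        (C x.1 + ∑ i : Fin n, C (x.2 i) * X i)).f k = x.2 ⟨k - 1, by omega⟩ := by
  rw [map_add, map_sum, add_f, sum_f]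
  simp only [map_mul, psi_X, psi_C]
  rw [Cte_f, if_neg (by omega), zero_add]
  rw [Finset.sum_eq_single (⟨k - 1, by omega⟩ : Fin n)]
  · show (Cte (x.2 _) * delta _ _ : TE A n lam hsym hassoc).f k = _
    rw [Cte_mul_delta_f, if_pos (by simp; omega)]
  · intro i _ hi
    show (Cte (x.2 i) * delta (i.1 + 1) i.2 : TE A n lam hsym hassoc).f k = 0
    rw [Cte_mul_delta_f, if_neg ?_]
    intro hki
    exact hi (by apply Fin.ext; simp; omega)
  · intro hmem
    exact absurd (Finset.mem_univ _) hmem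


lemma psi_mul_poly (x y : A × (Fin n → A)) :
    (psi (hsym := hsym) (hassoc := hassoc))
        (C (lamMul n lam x y).1 + ∑ i : Fin n, C ((lamMul n lam x y).2 i) * X i)
      = psi (C x.1 + ∑ i : Fin n, C (x.2 i) * X i)
          * psi (C y.1 + ∑ i : Fin n, C (y.2 i) * X i) := by
  ext k
  by_cases hk : k ≤ n
  · rw [mul_f_of_le _ _ hk]
    rcases Nat.eq_zero_or_pos k with rfl | hk1
    · rw [psi_poly_f_zero, show (0:ℕ) + 1 = 1 from rfl, Finset.range_one,
        Finset.sum_singleton, Nat.sub_zero, lamExt_zero_left, one_mul,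
        psi_poly_f_zero, psi_poly_f_zero]
      rfl
    · obtain ⟨m, rfl⟩ : ∃ m, k = m + 1 := ⟨k - 1, by omega⟩
      have hmn : m < n := by omega
      rw [psi_poly_f _ _ (by omega) hk]
      have hL : (lamMul n lam x y).2 ⟨m + 1 - 1, by omega⟩
          = x.1 * y.2 ⟨m, hmn⟩ + y.1 * x.2 ⟨m, hmn⟩ +
              ∑ j : Fin m, lam (j.1 + 1) (m - j.1) * x.2 ⟨j.1, by omega⟩ *
                y.2 ⟨m - j.1 - 1, by omega⟩ := rfl
      rw [hL]
      rw [Finset.sum_range_succ', Finset.sum_range_succ]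
      have h0 : lamExt lam 0 (m + 1 - 0) *
            (psi (hsym := hsym) (hassoc := hassoc)
              (C x.1 + ∑ i : Fin n, C (x.2 i) * X i)).f 0 *
            (psi (hsym := hsym) (hassoc := hassoc) (C y.1 + ∑ i : Fin n, C (y.2 i) * X i)).f (m + 1 - 0)
          = x.1 * y.2 ⟨m, hmn⟩ := by
        rw [lamExt_zero_left, one_mul, psi_poly_f_zero, Nat.sub_zero,
          psi_poly_f _ _ (by omega) hk]
        have e : (⟨m + 1 - 1, by omega⟩ : Fin n) = ⟨m, hmn⟩ := by apply Fin.ext; simp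
        rw [e]
      have htop : lamExt lam (m + 1) (m + 1 - (m + 1)) *
            (psi (hsym := hsym) (hassoc := hassoc)
              (C x.1 + ∑ i : Fin n, C (x.2 i) * X i)).f (m + 1) *
            (psi (hsym := hsym) (hassoc := hassoc) (C y.1 + ∑ i : Fin n, C (y.2 i) * X i)).f (m + 1 - (m + 1))
          = x.2 ⟨m, hmn⟩ * y.1 := by
        rw [Nat.sub_self, lamExt_zero_right, one_mul, psi_poly_f _ _ (by omega) hk,
          psi_poly_f_zero]
        have e : (⟨m + 1 - 1, by omega⟩ : Fin n) = ⟨m, hmn⟩ := by apply Fin.ext; simp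
        rw [e]
      have hmid : ∑ i ∈ Finset.range m, lamExt lam (i + 1) (m + 1 - (i + 1)) *
            (psi (hsym := hsym) (hassoc := hassoc)
              (C x.1 + ∑ i : Fin n, C (x.2 i) * X i)).f (i + 1) *
            (psi (hsym := hsym) (hassoc := hassoc) (C y.1 + ∑ i : Fin n, C (y.2 i) * X i)).f (m + 1 - (i + 1))
          = ∑ j : Fin m, lam (j.1 + 1) (m - j.1) * x.2 ⟨j.1, by omega⟩ *
              y.2 ⟨m - j.1 - 1, by omega⟩ := by
        rw [← Fin.sum_univ_eq_sum_range]
        refine Finset.sum_congr rfl fun i _ => ?_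
        have hi := i.2
        have e1 : m + 1 - (i.1 + 1) = m - i.1 := by omega
        rw [e1, lamExt_pos lam (by omega) (by omega),
          psi_poly_f _ _ (by omega) (by omega),
          psi_poly_f _ _ (by omega) (by omega)]
        have e2 : (⟨i.1 + 1 - 1, by omega⟩ : Fin n) = ⟨i.1, by omega⟩ := by
          apply Fin.ext; simp
        have e3 : (⟨m - i.1 - 1, by omega⟩ : Fin n) = ⟨m - i.1 - 1, by omega⟩ := rfl
        rw [e2]
      rw [h0, htop, hmid]
      ring
  · rw [(psi _).supp k (by omega), mul_f, if_neg hk]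


lemma psi_poly_inj (x y : A × (Fin n → A))
    (h : (psi (hsym := hsym) (hassoc := hassoc)) (C x.1 + ∑ i : Fin n, C (x.2 i) * X i)
        = psi (C y.1 + ∑ i : Fin n, C (y.2 i) * X i)) : x = y := by
  refine Prod.ext ?_ (funext fun i => ?_)
  · have h0 : ((psi (hsym := hsym) (hassoc := hassoc))
        (C x.1 + ∑ i : Fin n, C (x.2 i) * X i)).f 0
        = (psi (hsym := hsym) (hassoc := hassoc) (C y.1 + ∑ i : Fin n, C (y.2 i) * X i)).f 0 := by rw [h]
    rwa [psi_poly_f_zero, psi_poly_f_zero] at h0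
  · have hi2 := i.2
    have h1 : ((psi (hsym := hsym) (hassoc := hassoc))
        (C x.1 + ∑ i : Fin n, C (x.2 i) * X i)).f (i.1 + 1)
        = (psi (hsym := hsym) (hassoc := hassoc) (C y.1 + ∑ i : Fin n, C (y.2 i) * X i)).f (i.1 + 1) := by rw [h]
    rw [psi_poly_f _ _ (by omega) (by omega), psi_poly_f _ _ (by omega) (by omega)] at h1
    have e : (⟨i.1 + 1 - 1, by omega⟩ : Fin n) = i := by apply Fin.ext; simp
    rwa [e] at h1

end TE
end TrivExtAux

/-- If the `λ_{i,j}` are symmetric and satisfy the associativity condition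
`λ_{i,j} λ_{i+j,k} = λ_{j,k} λ_{i,j+k}` (in range), then
`(a₀,a₁,…,aₙ) ↦ a₀ + a₁ t₁ + ⋯ + aₙ tₙ (mod Jₙ)` is an isomorphism of `A`-algebras
`A ⋉ₙ A ≅ A[t₁,…,tₙ]/Jₙ` (stated here unbundled: the map is bijective, additive,
multiplicative, unital, and commutes with the structural maps from `A`). -/
theorem trivExt_iso_quotient {A : Type*} [CommRing A] (n : ℕ) (hn : 1 ≤ n)
    (lam : ℕ → ℕ → A)
    (hsym : ∀ i j, 1 ≤ i → 1 ≤ j → i + j ≤ n → lam i j = lam j i)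
    (hassoc : ∀ i j l, 1 ≤ i → 1 ≤ j → 1 ≤ l → i + j + l ≤ n →
      lam i j * lam (i + j) l = lam j l * lam i (j + l)) :
    Function.Bijective (fun x : A × (Fin n → A) =>
      Ideal.Quotient.mk (Jideal n lam) (C x.1 + ∑ i : Fin n, C (x.2 i) * X i)) ∧
    (∀ x y : A × (Fin n → A),
      Ideal.Quotient.mk (Jideal n lam) (C (x + y).1 + ∑ i : Fin n, C ((x + y).2 i) * X i) =
        Ideal.Quotient.mk (Jideal n lam) (C x.1 + ∑ i : Fin n, C (x.2 i) * X i) +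
          Ideal.Quotient.mk (Jideal n lam) (C y.1 + ∑ i : Fin n, C (y.2 i) * X i)) ∧
    (∀ x y : A × (Fin n → A),
      Ideal.Quotient.mk (Jideal n lam)
          (C (lamMul n lam x y).1 + ∑ i : Fin n, C ((lamMul n lam x y).2 i) * X i) =
        Ideal.Quotient.mk (Jideal n lam) (C x.1 + ∑ i : Fin n, C (x.2 i) * X i) *
          Ideal.Quotient.mk (Jideal n lam) (C y.1 + ∑ i : Fin n, C (y.2 i) * X i)) ∧
    (Ideal.Quotient.mk (Jideal n lam)
        (C (1 : A) + ∑ i : Fin n, C ((0 : Fin n → A) i) * X i) = 1) ∧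
    (∀ a : A,
      Ideal.Quotient.mk (Jideal n lam) (C a + ∑ i : Fin n, C ((0 : Fin n → A) i) * X i) =
        algebraMap A (MvPolynomial (Fin n) A ⧸ Jideal n lam) a) := by
  classical
  set Q := MvPolynomial (Fin n) A ⧸ Jideal n lam with hQ
  set mk := Ideal.Quotient.mk (Jideal n lam) with hmk
  set φ := fun x : A × (Fin n → A) => mk (C x.1 + ∑ i : Fin n, C (x.2 i) * X i) with hφ
  -- structural map
  have halgC : ∀ a : A, algebraMap A Q a = mk (C a) := fun a => rfl
  have halg : ∀ a : A,
      mk (C a + ∑ i : Fin n, C ((0 : Fin n → A) i) * X i) = algebraMap A Q a := by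
    intro a
    simp only [Pi.zero_apply, map_zero, zero_mul, Finset.sum_const_zero, add_zero]
    exact (halgC a).symm
  have hone : mk (C (1 : A) + ∑ i : Fin n, C ((0 : Fin n → A) i) * X i) = 1 := by
    rw [halg 1, map_one]
  -- additivity
  have hadd : ∀ x y : A × (Fin n → A),
      mk (C (x + y).1 + ∑ i : Fin n, C ((x + y).2 i) * X i) = φ x + φ y := by
    intro x y
    rw [hφ]
    dsimp only
    rw [← map_add]
    congr 1
    simp only [Prod.fst_add, Prod.snd_add, Pi.add_apply, map_add, add_mul,
      Finset.sum_add_distrib]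
    ring
  -- smul
  have hCmul : ∀ (a : A) (p : MvPolynomial (Fin n) A), mk (C a * p) = a • mk p := by
    intro a p
    calc mk (C a * p) = (Ideal.Quotient.mkₐ A (Jideal n lam)) (a • p) := by
          rw [← MvPolynomial.C_mul']; rfl
      _ = a • (Ideal.Quotient.mkₐ A (Jideal n lam)) p := map_smul _ _ _
      _ = a • mk p := rfl
  have hsmul : ∀ (a : A) (x : A × (Fin n → A)), a • φ x = φ (a • x) := by
    intro a x
    rw [hφ]
    dsimp only
    rw [← hCmul, mul_add, Finset.mul_sum]
    congr 1
    simp only [Prod.smul_fst, Prod.smul_snd, Pi.smul_apply, smul_eq_mul, map_mul]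
    congr 1
    exact Finset.sum_congr rfl fun i _ => by ring
  -- membership helpers
  have h0mem : (0 : Q) ∈ Set.range φ := by
    refine ⟨0, ?_⟩
    rw [hφ]
    dsimp only
    simp
  have haddmem : ∀ q1 q2 : Q, q1 ∈ Set.range φ → q2 ∈ Set.range φ →
      q1 + q2 ∈ Set.range φ := by
    rintro _ _ ⟨x, rfl⟩ ⟨y, rfl⟩
    exact ⟨x + y, hadd x y⟩
  have hsmulmem : ∀ (a : A) (q : Q), q ∈ Set.range φ → a • q ∈ Set.range φ := by
    rintro a _ ⟨x, rfl⟩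
    exact ⟨a • x, (hsmul a x).symm⟩
  have hXmem : ∀ i : Fin n, mk (X i) ∈ Set.range φ := by
    intro i
    refine ⟨(0, Pi.single i 1), ?_⟩
    rw [hφ]
    dsimp only
    congr 1
    simp [Pi.single_apply, apply_ite C, ite_mul]
  have hXXmem : ∀ i j : Fin n, mk (X i * X j) ∈ Set.range φ := by
    intro i j
    by_cases hij : i.1 + j.1 + 2 ≤ n
    · have hmem : (X i * X j -
          C (lam (i.1 + 1) (j.1 + 1)) * X (⟨i.1 + j.1 + 1, by omega⟩ : Fin n)) ∈
            Jideal n lam := by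
        apply Ideal.subset_span
        left
        exact ⟨i, j, hij, rfl⟩
      have heq : mk (X i * X j) =
          mk (C (lam (i.1 + 1) (j.1 + 1)) * X (⟨i.1 + j.1 + 1, by omega⟩ : Fin n)) :=
        (Ideal.Quotient.mk_eq_mk_iff_sub_mem _ _).mpr hmem
      rw [heq, hCmul]
      exact hsmulmem _ _ (hXmem _)
    · have hmem : (X i * X j : MvPolynomial (Fin n) A) ∈ Jideal n lam :=
        Ideal.subset_span (Or.inr ⟨i, j, by omega, rfl⟩)
      rw [show mk (X i * X j) = 0 from Ideal.Quotient.eq_zero_iff_mem.mpr hmem]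
      exact h0mem
  -- surjectivity
  have hsurj : ∀ q : Q, ∃ x, φ x = q := by
    intro q
    obtain ⟨p, rfl⟩ := Ideal.Quotient.mk_surjective q
    suffices h : mk p ∈ Set.range φ by exact h
    induction p using MvPolynomial.induction_on with
    | C a =>
        refine ⟨(a, 0), ?_⟩
        rw [hφ]
        dsimp only
        simp
    | add p q hp hq =>
        rw [map_add]
        exact haddmem _ _ hp hq
    | mul_X p i hp =>
        obtain ⟨x, hx⟩ := hp
        rw [map_mul, ← hx, hφ]
        dsimp only
        rw [← map_mul, add_mul, Finset.sum_mul, map_add]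
        refine haddmem _ _ ?_ ?_
        · rw [hCmul]
          exact hsmulmem _ _ (hXmem i)
        · rw [map_sum]
          refine Finset.sum_induction _ (· ∈ Set.range φ) haddmem h0mem ?_
          intro j _
          rw [show C (x.2 j) * X j * X i = C (x.2 j) * (X j * X i) from by ring, hCmul]
          exact hsmulmem _ _ (hXXmem j i)
  -- injectivity via the model
  have hinj : Function.Injective φ := by
    intro x y hxy
    have h := congrArg (TE.psiQ (hsym := hsym) (hassoc := hassoc)) hxy
    rw [hφ] at h
    dsimp only at h
    rw [hmk, TE.psiQ_mk, TE.psiQ_mk] at h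
    exact TE.psi_poly_inj x y h
  have hpsiQinj : Function.Injective (TE.psiQ (hsym := hsym) (hassoc := hassoc)) := by
    intro q1 q2 h
    obtain ⟨x, rfl⟩ := hsurj q1
    obtain ⟨y, rfl⟩ := hsurj q2
    rw [hφ] at h ⊢
    dsimp only at h ⊢
    rw [hmk, TE.psiQ_mk, TE.psiQ_mk] at h
    rw [TE.psi_poly_inj x y h]
  -- multiplicativity
  have hmul : ∀ x y : A × (Fin n → A),
      mk (C (lamMul n lam x y).1 + ∑ i : Fin n, C ((lamMul n lam x y).2 i) * X i) =
        φ x * φ y := by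
    intro x y
    apply hpsiQinj
    rw [hφ]
    dsimp only
    rw [hmk, map_mul, TE.psiQ_mk, TE.psiQ_mk, TE.psiQ_mk, TE.psi_mul_poly]
  exact ⟨⟨hinj, fun q => hsurj q⟩, hadd, hmul, hone, halg⟩
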